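/- arXiv:1912.04456 — 9 statements merged into one kernel-verified Lean document; each statement's English description precedes it below -/
import Mathlib

section
/- Let B be an n×n real symmetric positive definite matrix and s, y ∈ ℝⁿ with sᵀy > 0. Then the BFGS update B⁺ = B + (y yᵀ)/(sᵀy) − (B s sᵀ B)/(sᵀ B s) is symmetric positive definite. -/
open Matrix

lemma dot_vecMulVec {n : ℕ} (u v x : Fin n → ℝ) :
    x ⬝ᵥ (vecMulVec u v *ᵥ x) = (x ⬝ᵥ u) * (v ⬝ᵥ x) := by
  simp only [dotProduct, mulVec, vecMulVec_apply, Finset.sum_mul, Finset.mul_sum]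
  rw [Finset.sum_comm]
  exact Finset.sum_congr rfl fun i _ => Finset.sum_congr rfl fun j _ => by ring

lemma vecMulVec_isHermitian {n : ℕ} (u : Fin n → ℝ) :
    (vecMulVec u u).IsHermitian := by
  ext i j
  simp [vecMulVec_apply, conjTranspose_apply, mul_comm]

/-- If `B` is symmetric positive definite and `sᵀy > 0`, then the BFGS
update `B⁺ = B + (y yᵀ)⁄(sᵀy) − (B s sᵀ B)⁄(sᵀ B s)` is symmetric positive definite. -/
theorem bfgs_posDef {n : ℕ} (B : Matrix (Fin n) (Fin n) ℝ) (hB : B.PosDef)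
    (s y : Fin n → ℝ) (hsy : 0 < s ⬝ᵥ y) :
    (B + (s ⬝ᵥ y)⁻¹ • vecMulVec y y
        - (s ⬝ᵥ (B *ᵥ s))⁻¹ • vecMulVec (B *ᵥ s) (s ᵥ* B)).PosDef := by
  have hBT : Bᵀ = B := hB.1
  have hvm : s ᵥ* B = B *ᵥ s := by rw [← mulVec_transpose, hBT]
  have hs0 : s ≠ 0 := by
    rintro rfl; simp at hsy
  have hsBs : 0 < s ⬝ᵥ (B *ᵥ s) := by simpa using hB.dotProduct_mulVec_pos hs0
  -- symmetric cross terms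
  have hcross : ∀ x : Fin n → ℝ, s ⬝ᵥ (B *ᵥ x) = x ⬝ᵥ (B *ᵥ s) := by
    intro x
    rw [dotProduct_mulVec, ← mulVec_transpose, hBT, dotProduct_comm]
  have hsm : ∀ (a : ℝ) (u : Fin n → ℝ), (a • vecMulVec u u).IsHermitian := by
    intro a u
    show _ = _
    rw [conjTranspose_smul, vecMulVec_isHermitian u, star_trivial]
  rw [posDef_iff_dotProduct_mulVec]
  constructor
  · rw [hvm]
    exact (hB.1.add (hsm _ y)).sub (hsm _ (B *ᵥ s))
  · intro x hx
    have hstar : star x = x := by simp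
    rw [hstar, sub_mulVec, add_mulVec, dotProduct_sub, dotProduct_add,
      smul_mulVec, smul_mulVec, dotProduct_smul, dotProduct_smul,
      dot_vecMulVec, hvm, dot_vecMulVec]
    set u := B *ᵥ s with hu
    have hyx : y ⬝ᵥ x = x ⬝ᵥ y := dotProduct_comm _ _
    have hux : u ⬝ᵥ x = x ⬝ᵥ u := dotProduct_comm _ _
    rw [hyx, hux]
    by_cases hdep : ∃ c : ℝ, x = c • s
    · obtain ⟨c, rfl⟩ := hdep
      have hc : c ≠ 0 := by rintro rfl; simp at hx
      have h1 : (c • s) ⬝ᵥ (B *ᵥ (c • s)) = c * c * (s ⬝ᵥ u) := by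
        rw [mulVec_smul, dotProduct_smul, smul_dotProduct, smul_eq_mul, smul_eq_mul, hu]
        ring
      have h2 : (c • s) ⬝ᵥ y = c * (s ⬝ᵥ y) := by rw [smul_dotProduct]; simp
      have h3 : (c • s) ⬝ᵥ u = c * (s ⬝ᵥ u) := by rw [smul_dotProduct]; simp
      rw [h1, h2, h3, smul_eq_mul, smul_eq_mul]
      have key : c * c * (s ⬝ᵥ u) + (s ⬝ᵥ y)⁻¹ * (c * (s ⬝ᵥ y) * (c * (s ⬝ᵥ y)))
          - (s ⬝ᵥ u)⁻¹ * (c * (s ⬝ᵥ u) * (c * (s ⬝ᵥ u))) = c ^ 2 * (s ⬝ᵥ y) := by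
        field_simp
        ring
      rw [key]
      positivity
    · -- x not a multiple of s
      set t : ℝ := (x ⬝ᵥ u) / (s ⬝ᵥ u) with ht
      have hw : x - t • s ≠ 0 := by
        intro h
        exact hdep ⟨t, by linear_combination (norm := (ext i; simp)) h⟩
      have hwBw : 0 < (x - t • s) ⬝ᵥ (B *ᵥ (x - t • s)) := by simpa using hB.dotProduct_mulVec_pos hw
      have hexp : (x - t • s) ⬝ᵥ (B *ᵥ (x - t • s))
          = x ⬝ᵥ (B *ᵥ x) - (x ⬝ᵥ u) * (x ⬝ᵥ u) / (s ⬝ᵥ u) := by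
        rw [mulVec_sub, dotProduct_sub, sub_dotProduct, sub_dotProduct,
          mulVec_smul, dotProduct_smul, dotProduct_smul, smul_dotProduct,
          smul_dotProduct, hcross x]
        simp only [smul_eq_mul, ← hu]
        field_simp [ht]
        rw [ht]
        field_simp
        try ring
      rw [hexp] at hwBw
      have hyterm : 0 ≤ (s ⬝ᵥ y)⁻¹ * ((x ⬝ᵥ y) * (x ⬝ᵥ y)) :=
        mul_nonneg (inv_nonneg.2 hsy.le) (mul_self_nonneg _)
      simp only [smul_eq_mul]
      have heq : (s ⬝ᵥ u)⁻¹ * ((x ⬝ᵥ u) * (x ⬝ᵥ u)) = (x ⬝ᵥ u) * (x ⬝ᵥ u) / (s ⬝ᵥ u) := by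
        ring
      rw [heq]
      linarith
end

section
/- Let B be an n×n real symmetric positive definite matrix, s ∈ ℝⁿ a nonzero vector and y ∈ ℝⁿ. With the Powell damped parameter θ and damped gradient difference ȳ = θ y + (1 − θ) B s, one has sᵀȳ = 0.2 sᵀB s when sᵀy ≤ 0.2 sᵀB s and sᵀȳ = sᵀy otherwise; in particular sᵀȳ ≥ 0.2 sᵀB s > 0, and consequently the damped BFGS update B⁺ = B + (ȳ ȳᵀ)/(sᵀȳ) − (B s sᵀ B)/(sᵀ B s) is symmetric positive definite. -/
open Matrix

private lemma vecMulVec_mulVec' {n : ℕ} (v w x : Fin n → ℝ) :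
    vecMulVec v w *ᵥ x = (w ⬝ᵥ x) • v := by
  ext i
  simp [vecMulVec_apply, mulVec, dotProduct, Finset.mul_sum, mul_assoc,
    mul_comm, mul_left_comm]

/-- With the Powell damped parameter `θ` and damped gradient difference
`ȳ = θ y + (1 − θ) B s`, one has `sᵀȳ = 0.2 sᵀB s` when `sᵀy ≤ 0.2 sᵀB s` and
`sᵀȳ = sᵀy` otherwise; in particular `sᵀȳ ≥ 0.2 sᵀB s > 0`, and consequently the
damped BFGS update `B⁺ = B + (ȳ ȳᵀ)/(sᵀȳ) − (B s sᵀ B)/(sᵀ B s)` is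
symmetric positive definite. -/
theorem damped_bfgs_posDef {n : ℕ} (B : Matrix (Fin n) (Fin n) ℝ)
    (hB : B.PosDef) (s y : Fin n → ℝ) (hs : s ≠ 0) (θ : ℝ)
    (hθ : θ = if s ⬝ᵥ y ≤ 0.2 * (s ⬝ᵥ (B *ᵥ s))
        then 0.8 * (s ⬝ᵥ (B *ᵥ s)) / (s ⬝ᵥ (B *ᵥ s) - s ⬝ᵥ y)
        else 1)
    (ybar : Fin n → ℝ) (hybar : ybar = θ • y + (1 - θ) • (B *ᵥ s)) :
    (s ⬝ᵥ ybar = if s ⬝ᵥ y ≤ 0.2 * (s ⬝ᵥ (B *ᵥ s))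
        then 0.2 * (s ⬝ᵥ (B *ᵥ s)) else s ⬝ᵥ y)
    ∧ 0.2 * (s ⬝ᵥ (B *ᵥ s)) ≤ s ⬝ᵥ ybar
    ∧ 0 < 0.2 * (s ⬝ᵥ (B *ᵥ s))
    ∧ (B + (s ⬝ᵥ ybar)⁻¹ • vecMulVec ybar ybar
        - (s ⬝ᵥ (B *ᵥ s))⁻¹ • vecMulVec (B *ᵥ s) (s ᵥ* B)).PosDef := by
  have hBsym : Bᵀ = B := by
    have := hB.1
    simpa [Matrix.IsHermitian, Matrix.conjTranspose_eq_transpose_of_trivial] using this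
  have ha : 0 < s ⬝ᵥ (B *ᵥ s) := by
    have := hB.dotProduct_mulVec_pos hs
    simpa using this
  set a : ℝ := s ⬝ᵥ (B *ᵥ s) with ha_def
  -- value of s ⬝ᵥ ybar
  have hsy : s ⬝ᵥ ybar = θ * (s ⬝ᵥ y) + (1 - θ) * a := by
    simp [hybar, dotProduct_add, dotProduct_smul, smul_eq_mul, ha_def]
  have key : s ⬝ᵥ ybar = if s ⬝ᵥ y ≤ 0.2 * a then 0.2 * a else s ⬝ᵥ y := by
    by_cases h : s ⬝ᵥ y ≤ 0.2 * a
    · have hden : a - s ⬝ᵥ y > 0 := by nlinarith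
      have hθ' : θ = 0.8 * a / (a - s ⬝ᵥ y) := by rw [hθ, if_pos h]
      rw [if_pos h, hsy, hθ']
      field_simp
      ring
    · have hθ' : θ = 1 := by rw [hθ, if_neg h]
      rw [if_neg h, hsy, hθ']
      ring
  have hge : 0.2 * a ≤ s ⬝ᵥ ybar := by
    rw [key]; split <;> linarith
  have hpos2 : 0 < 0.2 * a := by linarith
  have hsyb : 0 < s ⬝ᵥ ybar := lt_of_lt_of_le hpos2 hge
  refine ⟨key, hge, hpos2, ?_⟩
  have hvm : s ᵥ* B = B *ᵥ s := by rw [← hBsym, vecMul_transpose, hBsym]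
  rw [hvm]
  have hBij : ∀ i j, B j i = B i j := by
    intro i j
    exact (congrFun (congrFun hBsym i) j : Bᵀ i j = B i j)
  refine Matrix.PosDef.of_dotProduct_mulVec_pos ?_ ?_
  · -- Hermitian
    ext i j
    simp [Matrix.conjTranspose_apply, Matrix.add_apply, Matrix.sub_apply,
      Matrix.smul_apply, vecMulVec_apply, hBij, mul_comm]
  · intro x hx
    have hquad : star x ⬝ᵥ ((B + (s ⬝ᵥ ybar)⁻¹ • vecMulVec ybar ybar
        - a⁻¹ • vecMulVec (B *ᵥ s) (B *ᵥ s)) *ᵥ x)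
        = x ⬝ᵥ (B *ᵥ x) + (s ⬝ᵥ ybar)⁻¹ * (ybar ⬝ᵥ x) ^ 2
          - a⁻¹ * ((B *ᵥ s) ⬝ᵥ x) ^ 2 := by
      simp [sub_mulVec, add_mulVec, smul_mulVec, vecMulVec_mulVec',
        dotProduct_sub, dotProduct_add, dotProduct_smul, smul_eq_mul,
        dotProduct_comm ybar x, dotProduct_comm (B *ᵥ s) x]
      ring
    rw [hquad]
    set t : ℝ := ((B *ᵥ s) ⬝ᵥ x) / a with ht
    set z : Fin n → ℝ := x - t • s with hz
    have hBx_symm : ∀ u v : Fin n → ℝ, u ⬝ᵥ (B *ᵥ v) = v ⬝ᵥ (B *ᵥ u) := by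
      intro u v
      rw [dotProduct_mulVec, ← mulVec_transpose, hBsym, dotProduct_comm]
    have hzz : z ⬝ᵥ (B *ᵥ z) = x ⬝ᵥ (B *ᵥ x) - a⁻¹ * ((B *ᵥ s) ⬝ᵥ x) ^ 2 := by
      have e1 : (B *ᵥ s) ⬝ᵥ x = s ⬝ᵥ (B *ᵥ x) := by
        rw [dotProduct_comm, hBx_symm x s]
      have hzexp : z ⬝ᵥ (B *ᵥ z)
          = x ⬝ᵥ (B *ᵥ x) - 2 * t * (s ⬝ᵥ (B *ᵥ x)) + t ^ 2 * a := by
        simp only [hz, mulVec_sub, dotProduct_sub, sub_dotProduct,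
          Matrix.mulVec_smul, dotProduct_smul, smul_dotProduct, smul_eq_mul]
        have := hBx_symm x s
        rw [ha_def]
        ring_nf
        rw [hBx_symm s x]
        ring
      rw [hzexp, ht, e1]
      field_simp
      ring
    have hzB : 0 ≤ z ⬝ᵥ (B *ᵥ z) := by
      by_cases hzz0 : z = 0
      · simp [hzz0]
      · have := hB.dotProduct_mulVec_pos hzz0
        simpa using this.le
    have hyterm : 0 ≤ (s ⬝ᵥ ybar)⁻¹ * (ybar ⬝ᵥ x) ^ 2 :=
      mul_nonneg (inv_nonneg.mpr hsyb.le) (sq_nonneg _)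
    by_cases hzz0 : z = 0
    · -- x = t • s, t ≠ 0, ybar term strictly positive
      have hxts : x = t • s := by
        have h0 : x - t • s = 0 := hzz0
        exact sub_eq_zero.mp h0
      have ht0 : t ≠ 0 := by
        intro h0
        apply hx
        rw [hxts, h0, zero_smul]
      have hyx : ybar ⬝ᵥ x = t * (s ⬝ᵥ ybar) := by
        rw [hxts, dotProduct_smul, smul_eq_mul, dotProduct_comm]
      have : 0 < (s ⬝ᵥ ybar)⁻¹ * (ybar ⬝ᵥ x) ^ 2 := by
        rw [hyx]
        positivity
      linarith [hzB, hzz, this]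
    · have hzBpos : 0 < z ⬝ᵥ (B *ᵥ z) := by
        have := hB.dotProduct_mulVec_pos hzz0
        simpa using this
      nlinarith [hzz, hyterm, hzBpos]
end

section
/- (Lemma 1, part 1) Let γ > 0 and δ > 0 satisfy 0.8 δ ≥ γ. Let B be an n×n real symmetric positive definite matrix, s ∈ ℝⁿ a nonzero vector and y ∈ ℝⁿ. Define the damped parameter θ̄ = (0.8 sᵀ(B + δI)s − γ sᵀs)/(sᵀ(B + δI)s − sᵀy) if sᵀy ≤ 0.2 sᵀ(B + δI)s + γ sᵀs, and θ̄ = 1 otherwise. Then 0 < θ̄ ≤ 1. -/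
open Matrix

/-- **Lemma 1, part 1.** With `0.8 δ ≥ γ > 0`, `δ > 0`, `B` symmetric
positive definite and `s ≠ 0`, the damped parameter
`θ̄ = (0.8 sᵀ(B + δI)s − γ sᵀs)/(sᵀ(B + δI)s − sᵀy)` if
`sᵀy ≤ 0.2 sᵀ(B + δI)s + γ sᵀs`, and `θ̄ = 1` otherwise, satisfies `0 < θ̄ ≤ 1`. -/
theorem new_damped_parameter_mem_Ioc {n : ℕ} (γ δ : ℝ) (hγ : 0 < γ) (hδ : 0 < δ)
    (hδγ : γ ≤ 0.8 * δ) (B : Matrix (Fin n) (Fin n) ℝ) (hB : B.PosDef)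
    (s y : Fin n → ℝ) (hs : s ≠ 0) (θ : ℝ)
    (hθ : θ = if s ⬝ᵥ y ≤ 0.2 * (s ⬝ᵥ ((B + δ • (1 : Matrix (Fin n) (Fin n) ℝ)) *ᵥ s))
              + γ * (s ⬝ᵥ s)
        then (0.8 * (s ⬝ᵥ ((B + δ • (1 : Matrix (Fin n) (Fin n) ℝ)) *ᵥ s)) - γ * (s ⬝ᵥ s))
          / (s ⬝ᵥ ((B + δ • (1 : Matrix (Fin n) (Fin n) ℝ)) *ᵥ s) - s ⬝ᵥ y)
        else 1) :
    0 < θ ∧ θ ≤ 1 := by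
  have hss : 0 < s ⬝ᵥ s := by
    have := dotProduct_self_eq_zero (v := s)
    have h0 : 0 ≤ s ⬝ᵥ s := Finset.sum_nonneg fun i _ => mul_self_nonneg (s i)
    rcases h0.lt_or_eq with h | h
    · exact h
    · exact absurd (this.mp h.symm) hs
  have hBs : 0 < s ⬝ᵥ (B *ᵥ s) := hB.re_dotProduct_pos hs
  have hexp : s ⬝ᵥ ((B + δ • (1 : Matrix (Fin n) (Fin n) ℝ)) *ᵥ s)
      = s ⬝ᵥ (B *ᵥ s) + δ * (s ⬝ᵥ s) := by
    rw [add_mulVec, dotProduct_add, smul_mulVec, one_mulVec, dotProduct_smul,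
      smul_eq_mul]
  set a := s ⬝ᵥ ((B + δ • (1 : Matrix (Fin n) (Fin n) ℝ)) *ᵥ s) with ha
  have hN : 0 < 0.8 * a - γ * (s ⬝ᵥ s) := by
    rw [hexp]
    nlinarith
  by_cases hc : s ⬝ᵥ y ≤ 0.2 * a + γ * (s ⬝ᵥ s)
  · rw [hθ, if_pos hc]
    have hD : 0.8 * a - γ * (s ⬝ᵥ s) ≤ a - s ⬝ᵥ y := by linarith
    have hDpos : 0 < a - s ⬝ᵥ y := lt_of_lt_of_le hN hD
    exact ⟨div_pos hN hDpos, div_le_one_of_le₀ hD hDpos.le⟩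
  · rw [hθ, if_neg hc]; exact ⟨one_pos, le_refl 1⟩
end

section
/- (Lemma 1, part 2) Let γ > 0 and δ > 0 satisfy 0.8 δ ≥ γ. Let B be an n×n real symmetric positive definite matrix, s ∈ ℝⁿ a nonzero vector and y ∈ ℝⁿ. With the damped parameter θ̄ and the modified gradient difference ỹ = θ̄ y + (1 − θ̄)(B + δI)s − γ s, one has sᵀỹ = 0.2 sᵀ(B + δI)s when sᵀy ≤ 0.2 sᵀ(B + δI)s + γ sᵀs and sᵀỹ = sᵀy − γ sᵀs otherwise; in particular sᵀỹ ≥ 0.2 sᵀ(B + δI)s > 0. -/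
open Matrix

/-- **Lemma 1, part 2.** With the damped parameter `θ̄` and the modified
gradient difference `ỹ = θ̄ y + (1 − θ̄)(B + δI)s − γ s`, one has
`sᵀỹ = 0.2 sᵀ(B + δI)s` when `sᵀy ≤ 0.2 sᵀ(B + δI)s + γ sᵀs` and
`sᵀỹ = sᵀy − γ sᵀs` otherwise; in particular `sᵀỹ ≥ 0.2 sᵀ(B + δI)s > 0`. -/
theorem new_damped_inner_product {n : ℕ} (γ δ : ℝ) (hγ : 0 < γ) (hδ : 0 < δ)
    (hδγ : γ ≤ 0.8 * δ) (B : Matrix (Fin n) (Fin n) ℝ) (hB : B.PosDef)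
    (s y : Fin n → ℝ) (hs : s ≠ 0) (θ : ℝ)
    (hθ : θ = if s ⬝ᵥ y ≤ 0.2 * (s ⬝ᵥ ((B + δ • (1 : Matrix (Fin n) (Fin n) ℝ)) *ᵥ s))
              + γ * (s ⬝ᵥ s)
        then (0.8 * (s ⬝ᵥ ((B + δ • (1 : Matrix (Fin n) (Fin n) ℝ)) *ᵥ s)) - γ * (s ⬝ᵥ s))
          / (s ⬝ᵥ ((B + δ • (1 : Matrix (Fin n) (Fin n) ℝ)) *ᵥ s) - s ⬝ᵥ y)
        else 1)
    (yt : Fin n → ℝ)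
    (hyt : yt = θ • y + (1 - θ) • ((B + δ • (1 : Matrix (Fin n) (Fin n) ℝ)) *ᵥ s) - γ • s) :
    (s ⬝ᵥ yt = if s ⬝ᵥ y ≤ 0.2 * (s ⬝ᵥ ((B + δ • (1 : Matrix (Fin n) (Fin n) ℝ)) *ᵥ s))
              + γ * (s ⬝ᵥ s)
        then 0.2 * (s ⬝ᵥ ((B + δ • (1 : Matrix (Fin n) (Fin n) ℝ)) *ᵥ s))
        else s ⬝ᵥ y - γ * (s ⬝ᵥ s))
    ∧ 0.2 * (s ⬝ᵥ ((B + δ • (1 : Matrix (Fin n) (Fin n) ℝ)) *ᵥ s)) ≤ s ⬝ᵥ yt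
    ∧ 0 < 0.2 * (s ⬝ᵥ ((B + δ • (1 : Matrix (Fin n) (Fin n) ℝ)) *ᵥ s)) := by
  set Q := s ⬝ᵥ ((B + δ • (1 : Matrix (Fin n) (Fin n) ℝ)) *ᵥ s) with hQ
  have hBs : 0 < s ⬝ᵥ (B *ᵥ s) := by
    have := hB.dotProduct_mulVec_pos hs
    simpa using this
  have hss : 0 < s ⬝ᵥ s := by
    have : (0:ℝ) < ∑ i, s i * s i := by
      rcases Function.ne_iff.mp hs with ⟨i, hi⟩
      exact Finset.sum_pos' (fun j _ => mul_self_nonneg _)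
        ⟨i, Finset.mem_univ i, mul_self_pos.mpr hi⟩
    simpa [dotProduct] using this
  have hQsplit : Q = s ⬝ᵥ (B *ᵥ s) + δ * (s ⬝ᵥ s) := by
    simp [hQ, Matrix.add_mulVec, Matrix.smul_mulVec, dotProduct_add,
      dotProduct_smul, smul_eq_mul]
  have hQpos : 0 < Q := by
    rw [hQsplit]; positivity
  have hkey : (0:ℝ) < 0.8 * Q - γ * (s ⬝ᵥ s) := by
    rw [hQsplit]
    have : γ * (s ⬝ᵥ s) ≤ 0.8 * δ * (s ⬝ᵥ s) :=
      mul_le_mul_of_nonneg_right hδγ hss.le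
    nlinarith
  have hinner : s ⬝ᵥ yt = θ * (s ⬝ᵥ y) + (1 - θ) * Q - γ * (s ⬝ᵥ s) := by
    simp [hyt, hQ, dotProduct_sub, dotProduct_add, dotProduct_smul, smul_eq_mul]
  by_cases hcase : s ⬝ᵥ y ≤ 0.2 * Q + γ * (s ⬝ᵥ s)
  · have hden : 0 < Q - s ⬝ᵥ y := by nlinarith
    have hθv : θ = (0.8 * Q - γ * (s ⬝ᵥ s)) / (Q - s ⬝ᵥ y) := by
      rw [hθ, if_pos hcase]
    have heq : s ⬝ᵥ yt = 0.2 * Q := by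
      rw [hinner, hθv]
      field_simp
      ring
    refine ⟨by rw [if_pos hcase]; exact heq, by rw [heq], by positivity⟩
  · have hθv : θ = 1 := by rw [hθ, if_neg hcase]
    have heq : s ⬝ᵥ yt = s ⬝ᵥ y - γ * (s ⬝ᵥ s) := by
      rw [hinner, hθv]; ring
    refine ⟨by rw [if_neg hcase]; exact heq, ?_, by positivity⟩
    rw [heq]; push_neg at hcase; linarith
end

section
/- (Remark 2) Let γ > 0 and δ > 0 satisfy 0.8 δ ≥ γ. Let B be an n×n real symmetric positive definite matrix with smallest eigenvalue λ_min(B), s ∈ ℝⁿ a nonzero vector and y ∈ ℝⁿ. With the damped parameter θ̄ and the modified gradient difference ỹ = θ̄ y + (1 − θ̄)(B + δI)s − γ s, one has sᵀỹ ≥ 0.2 (λ_min(B) + δ) sᵀs. -/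
open Matrix

lemma lambda_min_le_quadform {n : ℕ} (B : Matrix (Fin n) (Fin n) ℝ)
    (hB : B.IsHermitian) (s : Fin n → ℝ) [Nonempty (Fin n)] :
    (⨅ i, hB.eigenvalues i) * (s ⬝ᵥ s) ≤ s ⬝ᵥ (B *ᵥ s) := by
  set lam := ⨅ i, hB.eigenvalues i with hlam
  have hPSD : (B - lam • (1 : Matrix (Fin n) (Fin n) ℝ)).PosSemidef := by
    have hU := hB.spectral_theorem
    have h1 : (1 : Matrix (Fin n) (Fin n) ℝ) =
        (hB.eigenvectorUnitary : Matrix (Fin n) (Fin n) ℝ) * 1 *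
        (star (hB.eigenvectorUnitary : Matrix (Fin n) (Fin n) ℝ)) := by
      rw [Matrix.mul_one, (Matrix.mem_unitaryGroup_iff).mp hB.eigenvectorUnitary.2]
    have key : B - lam • (1 : Matrix (Fin n) (Fin n) ℝ) =
        (hB.eigenvectorUnitary : Matrix (Fin n) (Fin n) ℝ) *
        (diagonal (fun i => hB.eigenvalues i - lam)) *
        (star (hB.eigenvectorUnitary : Matrix (Fin n) (Fin n) ℝ)) := by
      have hd : diagonal (fun i => hB.eigenvalues i - lam)
          = diagonal (RCLike.ofReal ∘ hB.eigenvalues)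
            - lam • (1 : Matrix (Fin n) (Fin n) ℝ) := by
        ext i j
        by_cases h : i = j
        · subst h; simp
        · simp [Matrix.diagonal_apply_ne _ h, Matrix.one_apply_ne h]
      rw [hd, Matrix.mul_sub, Matrix.sub_mul, ← Unitary.conjStarAlgAut_apply (S := ℝ), ← hU]
      congr 1
      rw [Matrix.mul_smul, Matrix.smul_mul, Matrix.mul_one,
        (Matrix.mem_unitaryGroup_iff).mp hB.eigenvectorUnitary.2]
    rw [key]
    refine PosSemidef.mul_mul_conjTranspose_same ?_ _
    refine posSemidef_diagonal_iff.mpr fun i => ?_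
    have : lam ≤ hB.eigenvalues i := ciInf_le (Finite.bddBelow_range _) i
    linarith
  have h0 := hPSD.dotProduct_mulVec_nonneg s
  have hstar : star s = s := rfl
  rw [hstar, Matrix.sub_mulVec, dotProduct_sub, Matrix.smul_mulVec,
    Matrix.one_mulVec, dotProduct_smul, smul_eq_mul] at h0
  linarith

/-- **Remark 2.** With the damped parameter `θ̄` and the modified gradient
difference `ỹ = θ̄ y + (1 − θ̄)(B + δI)s − γ s`, one has
`sᵀỹ ≥ 0.2 (λ_min(B) + δ) sᵀs`, where `λ_min(B)` is the smallest eigenvalue of `B`. -/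
theorem new_damped_inner_product_lambda_min {n : ℕ} (γ δ : ℝ) (hγ : 0 < γ) (hδ : 0 < δ)
    (hδγ : γ ≤ 0.8 * δ) (B : Matrix (Fin n) (Fin n) ℝ) (hB : B.PosDef)
    (s y : Fin n → ℝ) (hs : s ≠ 0) (θ : ℝ)
    (hθ : θ = if s ⬝ᵥ y ≤ 0.2 * (s ⬝ᵥ ((B + δ • (1 : Matrix (Fin n) (Fin n) ℝ)) *ᵥ s))
              + γ * (s ⬝ᵥ s)
        then (0.8 * (s ⬝ᵥ ((B + δ • (1 : Matrix (Fin n) (Fin n) ℝ)) *ᵥ s)) - γ * (s ⬝ᵥ s))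
          / (s ⬝ᵥ ((B + δ • (1 : Matrix (Fin n) (Fin n) ℝ)) *ᵥ s) - s ⬝ᵥ y)
        else 1)
    (yt : Fin n → ℝ)
    (hyt : yt = θ • y + (1 - θ) • ((B + δ • (1 : Matrix (Fin n) (Fin n) ℝ)) *ᵥ s) - γ • s) :
    0.2 * ((⨅ i, hB.1.eigenvalues i) + δ) * (s ⬝ᵥ s) ≤ s ⬝ᵥ yt := by
  -- n must be positive since s ≠ 0
  rcases Nat.eq_zero_or_pos n with hn | hn
  · exfalso; apply hs; subst hn; ext i; exact absurd i.2 (by omega)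
  haveI : Nonempty (Fin n) := ⟨⟨0, hn⟩⟩
  -- basic quantities
  set lam := ⨅ i, hB.1.eigenvalues i with hlam
  have hss : 0 < s ⬝ᵥ s := by
    have hnn : 0 ≤ s ⬝ᵥ s := Finset.sum_nonneg fun i _ => mul_self_nonneg (s i)
    rcases hnn.lt_or_eq with h | h
    · exact h
    · exact absurd (dotProduct_self_eq_zero.mp h.symm) hs
  have hsBs : 0 < s ⬝ᵥ (B *ᵥ s) := by
    have := hB.re_dotProduct_pos hs
    simpa using this
  have hquad := lambda_min_le_quadform B hB.1 s
  -- expand Q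
  have hQ : s ⬝ᵥ ((B + δ • (1 : Matrix (Fin n) (Fin n) ℝ)) *ᵥ s)
      = s ⬝ᵥ (B *ᵥ s) + δ * (s ⬝ᵥ s) := by
    rw [Matrix.add_mulVec, dotProduct_add, Matrix.smul_mulVec,
      Matrix.one_mulVec, dotProduct_smul, smul_eq_mul]
  set Q := s ⬝ᵥ ((B + δ • (1 : Matrix (Fin n) (Fin n) ℝ)) *ᵥ s) with hQdef
  set p := s ⬝ᵥ y with hp
  have hsyt : s ⬝ᵥ yt = θ * p + (1 - θ) * Q - γ * (s ⬝ᵥ s) := by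
    rw [hyt, dotProduct_sub, dotProduct_add, dotProduct_smul, dotProduct_smul,
      dotProduct_smul, smul_eq_mul, smul_eq_mul, smul_eq_mul]
  have hQlb : 0.2 * (lam + δ) * (s ⬝ᵥ s) ≤ 0.2 * Q := by
    rw [hQ]; nlinarith
  by_cases hc : p ≤ 0.2 * Q + γ * (s ⬝ᵥ s)
  · rw [if_pos hc] at hθ
    have hden : 0 < Q - p := by
      rw [hQ]; nlinarith
    have hkey : s ⬝ᵥ yt = 0.2 * Q := by
      rw [hsyt, hθ]
      field_simp
      ring
    rw [hkey]; exact hQlb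
  · rw [if_neg hc] at hθ
    push_neg at hc
    rw [hsyt, hθ]
    have : θ = 1 := hθ
    nlinarith
end

section
/- Let B be an n×n real symmetric positive definite matrix, s ∈ ℝⁿ a nonzero vector, ỹ ∈ ℝⁿ with sᵀỹ > 0, and γ ≥ 0. Then the regularized BFGS update B⁺ = B + (ỹ ỹᵀ)/(sᵀỹ) − (B s sᵀ B)/(sᵀ B s) + γ I satisfies the spectral-norm bound ‖B⁺‖ ≤ ‖B‖ + (ỹᵀỹ)/(sᵀỹ) + γ. -/
set_option synthInstance.maxHeartbeats 1000000

open Matrix ContinuousLinearMap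
open scoped RealInnerProductSpace

section OpAux

variable {E : Type*} [NormedAddCommGroup E] [InnerProductSpace ℝ E] [CompleteSpace E]

/-- Cauchy–Schwarz for a positive operator. -/
lemma myPosCS (T : E →L[ℝ] E) (hT : T.IsPositive) (x y : E) :
    ⟪T x, y⟫ ^ 2 ≤ ⟪T x, x⟫ * ⟪T y, y⟫ := by
  have hsymm := hT.isSelfAdjoint.isSymmetric
  have hyx : ⟪T y, x⟫ = ⟪T x, y⟫ := (hsymm y x).trans (real_inner_comm (T x) y)
  have key : ∀ t : ℝ, 0 ≤ ⟪T y, y⟫ * (t * t) + (2 * ⟪T x, y⟫) * t + ⟪T x, x⟫ := by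
    intro t
    have h0 := hT.inner_nonneg_left (x + t • y)
    have heq : ⟪T (x + t • y), x + t • y⟫
        = ⟪T y, y⟫ * (t * t) + (2 * ⟪T x, y⟫) * t + ⟪T x, x⟫ := by
      rw [map_add, T.map_smul]
      simp only [inner_add_left, inner_add_right, real_inner_smul_left, real_inner_smul_right, hyx]
      ring
    linarith [heq ▸ h0]
  have hd := discrim_le_zero key
  rw [discrim] at hd
  nlinarith [hd]

/-- Norm monotonicity for positive operators: if `0 ≤ A ≤ B` then `‖A‖ ≤ ‖B‖`. -/
lemma myNormMono (A B : E →L[ℝ] E) (hA : A.IsPositive) (hBA : (B - A).IsPositive) :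
    ‖A‖ ≤ ‖B‖ := by
  have hAx : ∀ x : E, ‖A x‖ ^ 2 ≤ ‖A‖ * ⟪A x, x⟫ := by
    intro x
    have hcs := myPosCS A hA x (A x)
    have h1 : ⟪A x, A x⟫ = ‖A x‖ ^ 2 := real_inner_self_eq_norm_sq (A x)
    have h2 : ⟪A (A x), A x⟫ ≤ ‖A‖ * ‖A x‖ ^ 2 := by
      calc ⟪A (A x), A x⟫ ≤ ‖A (A x)‖ * ‖A x‖ := real_inner_le_norm _ _
        _ ≤ (‖A‖ * ‖A x‖) * ‖A x‖ := by
            have := A.le_opNorm (A x)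
            nlinarith [norm_nonneg (A x)]
        _ = ‖A‖ * ‖A x‖ ^ 2 := by ring
    have hAxx : (0:ℝ) ≤ ⟪A x, x⟫ := by
      have := hA.inner_nonneg_left x
      simpa using this
    rcases eq_or_lt_of_le (norm_nonneg (A x)) with h | h
    · simp only [← h]
      simpa using mul_nonneg (norm_nonneg A) hAxx
    · have h3 : ⟪A x, x⟫ * ⟪A (A x), A x⟫ ≤ ⟪A x, x⟫ * (‖A‖ * ‖A x‖ ^ 2) :=
        mul_le_mul_of_nonneg_left h2 hAxx
      nlinarith [hcs, h1, h3, mul_pos h h, sq_nonneg ‖A x‖]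
  have hBxx : ∀ x : E, ⟪A x, x⟫ ≤ ‖B‖ * ‖x‖ ^ 2 := by
    intro x
    have h0 := hBA.inner_nonneg_left x
    simp only [RCLike.re_to_real, ContinuousLinearMap.sub_apply, inner_sub_left] at h0
    have : ⟪B x, x⟫ ≤ ‖B‖ * ‖x‖ ^ 2 := by
      calc ⟪B x, x⟫ ≤ ‖B x‖ * ‖x‖ := real_inner_le_norm _ _
        _ ≤ (‖B‖ * ‖x‖) * ‖x‖ := by nlinarith [B.le_opNorm x, norm_nonneg x]
        _ = ‖B‖ * ‖x‖ ^ 2 := by ring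
    linarith
  have hbound : ‖A‖ ≤ Real.sqrt (‖A‖ * ‖B‖) := by
    apply A.opNorm_le_bound (Real.sqrt_nonneg _)
    intro x
    have h1 : ‖A x‖ ^ 2 ≤ (‖A‖ * ‖B‖) * ‖x‖ ^ 2 := by
      calc ‖A x‖ ^ 2 ≤ ‖A‖ * ⟪A x, x⟫ := hAx x
        _ ≤ ‖A‖ * (‖B‖ * ‖x‖ ^ 2) := by
            have := hBxx x
            nlinarith [norm_nonneg A, hAx x, sq_nonneg ‖A x‖]
        _ = (‖A‖ * ‖B‖) * ‖x‖ ^ 2 := by ring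
    have h2 : ‖A x‖ ≤ Real.sqrt ((‖A‖ * ‖B‖) * ‖x‖ ^ 2) := by
      rw [← Real.sqrt_sq (norm_nonneg (A x))]
      exact Real.sqrt_le_sqrt h1
    calc ‖A x‖ ≤ Real.sqrt ((‖A‖ * ‖B‖) * ‖x‖ ^ 2) := h2
      _ = Real.sqrt (‖A‖ * ‖B‖) * ‖x‖ := by
          rw [Real.sqrt_mul' _ (sq_nonneg ‖x‖), Real.sqrt_sq (norm_nonneg x)]
  rcases eq_or_lt_of_le (norm_nonneg A) with h | h
  · rw [← h]; exact norm_nonneg B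
  · have hAB : (0:ℝ) ≤ ‖A‖ * ‖B‖ := by
      nlinarith [norm_nonneg B, le_of_lt h]
    have := Real.sq_sqrt hAB
    nlinarith [hbound, Real.sqrt_nonneg (‖A‖ * ‖B‖)]

end OpAux

section MatAux

variable {n : ℕ}

lemma myCLM_apply (A : Matrix (Fin n) (Fin n) ℝ) (x : EuclideanSpace ℝ (Fin n)) :
    toEuclideanCLM (𝕜 := ℝ) A x
      = (WithLp.equiv 2 (Fin n → ℝ)).symm (A *ᵥ (WithLp.equiv 2 (Fin n → ℝ) x)) := by
  rfl

lemma myInner_clm (A : Matrix (Fin n) (Fin n) ℝ) (x y : EuclideanSpace ℝ (Fin n)) :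
    ⟪toEuclideanCLM (𝕜 := ℝ) A x, y⟫
      = (A *ᵥ (WithLp.equiv 2 (Fin n → ℝ) x)) ⬝ᵥ (WithLp.equiv 2 (Fin n → ℝ) y) := by
  rw [myCLM_apply]
  simp only [PiLp.inner_apply, RCLike.inner_apply, starRingEnd_apply, star_trivial,
    dotProduct]
  exact Finset.sum_congr rfl fun i _ => mul_comm _ _

lemma myIsPositive (M : Matrix (Fin n) (Fin n) ℝ) (hM : Mᵀ = M)
    (h : ∀ x : Fin n → ℝ, 0 ≤ (M *ᵥ x) ⬝ᵥ x) :
    (toEuclideanCLM (𝕜 := ℝ) M).IsPositive := by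
  constructor
  · apply IsSelfAdjoint.isSymmetric
    rw [_root_.IsSelfAdjoint, ← map_star]
    have hstar : star M = M := by
      ext i j
      simpa [Matrix.star_eq_conjTranspose, Matrix.conjTranspose_apply] using
        congrFun (congrFun hM i) j
    rw [hstar]
  · intro x
    rw [reApplyInnerSelf_apply]
    simp only [RCLike.re_to_real, myInner_clm]
    exact h _

lemma myVMV_mulVec (w v x : Fin n → ℝ) : vecMulVec w v *ᵥ x = (v ⬝ᵥ x) • w := by
  ext i
  simp only [Matrix.mulVec, dotProduct, vecMulVec_apply, Pi.smul_apply, smul_eq_mul,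
    Finset.sum_mul]
  exact Finset.sum_congr rfl fun j _ => by ring

lemma myDot_eq_inner (v w : Fin n → ℝ) :
    v ⬝ᵥ w = ⟪(WithLp.equiv 2 (Fin n → ℝ)).symm v, (WithLp.equiv 2 (Fin n → ℝ)).symm w⟫ := by
  simp only [PiLp.inner_apply, RCLike.inner_apply, starRingEnd_apply, star_trivial,
    dotProduct]
  exact Finset.sum_congr rfl fun i _ => mul_comm _ _

lemma myNorm_vmv (y : Fin n → ℝ) :
    ‖toEuclideanCLM (𝕜 := ℝ) (vecMulVec y y)‖ ≤ y ⬝ᵥ y := by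
  have hyy : (0:ℝ) ≤ y ⬝ᵥ y := by
    rw [myDot_eq_inner]
    exact real_inner_self_nonneg
  apply opNorm_le_bound _ hyy
  intro x
  rw [myCLM_apply, myVMV_mulVec]
  set y' : EuclideanSpace ℝ (Fin n) := (WithLp.equiv 2 (Fin n → ℝ)).symm y with hy'
  set x' : Fin n → ℝ := WithLp.equiv 2 (Fin n → ℝ) x with hx'
  have hmap : (WithLp.equiv 2 (Fin n → ℝ)).symm ((y ⬝ᵥ x') • y) = (y ⬝ᵥ x') • y' := rfl
  rw [hmap, norm_smul]
  have h1 : y ⬝ᵥ x' = ⟪y', x⟫ := myDot_eq_inner y x'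
  have h2 : |⟪y', x⟫| ≤ ‖y'‖ * ‖x‖ := abs_real_inner_le_norm y' x
  have h3 : y ⬝ᵥ y = ‖y'‖ ^ 2 := by
    rw [myDot_eq_inner]; exact real_inner_self_eq_norm_sq y'
  rw [Real.norm_eq_abs, h1]
  calc |⟪y', x⟫| * ‖y'‖ ≤ (‖y'‖ * ‖x‖) * ‖y'‖ := by
        nlinarith [norm_nonneg y', abs_nonneg (⟪y', x⟫), norm_nonneg x]
    _ = ‖y'‖ ^ 2 * ‖x‖ := by ring
    _ = (y ⬝ᵥ y) * ‖x‖ := by rw [h3]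

lemma myCLM_smul (a : ℝ) (M : Matrix (Fin n) (Fin n) ℝ) :
    toEuclideanCLM (𝕜 := ℝ) (a • M) = a • toEuclideanCLM (𝕜 := ℝ) M := by
  ext1 x
  rw [ContinuousLinearMap.smul_apply, myCLM_apply, myCLM_apply, Matrix.smul_mulVec]
  rfl

end MatAux

open Matrix

/-- The spectral norm (operator 2-norm) of a real square matrix. -/
noncomputable def specNorm {n : ℕ} (A : Matrix (Fin n) (Fin n) ℝ) : ℝ :=
  ‖Matrix.toEuclideanCLM (𝕜 := ℝ) A‖

/-- The regularized BFGS update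
`B⁺ = B + (ỹ ỹᵀ)/(sᵀỹ) − (B s sᵀ B)/(sᵀ B s) + γ I` satisfies the spectral-norm bound
`‖B⁺‖ ≤ ‖B‖ + (ỹᵀỹ)/(sᵀỹ) + γ`. -/
theorem regularized_bfgs_norm_bound {n : ℕ} (B : Matrix (Fin n) (Fin n) ℝ)
    (hB : B.PosDef) (s yt : Fin n → ℝ) (hs : s ≠ 0) (hsy : 0 < s ⬝ᵥ yt)
    (γ : ℝ) (hγ : 0 ≤ γ) (Bplus : Matrix (Fin n) (Fin n) ℝ)
    (hBplus : Bplus = B + (s ⬝ᵥ yt)⁻¹ • vecMulVec yt yt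
        - (s ⬝ᵥ (B *ᵥ s))⁻¹ • vecMulVec (B *ᵥ s) (s ᵥ* B)
        + γ • (1 : Matrix (Fin n) (Fin n) ℝ)) :
    specNorm Bplus ≤ specNorm B + (yt ⬝ᵥ yt) / (s ⬝ᵥ yt) + γ := by
  classical
  have hBT : Bᵀ = B := by
    ext i j
    have := congrFun (congrFun hB.1 i) j
    simpa [Matrix.conjTranspose_apply] using this
  set u : Fin n → ℝ := B *ᵥ s with hu
  have hsvb : s ᵥ* B = u := by
    rw [hu, ← Matrix.mulVec_transpose, hBT]
  have hsu : 0 < s ⬝ᵥ u := by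
    have := hB.dotProduct_mulVec_pos hs
    simpa using this
  set c : ℝ := (s ⬝ᵥ u)⁻¹ with hc
  have hc0 : 0 ≤ c := le_of_lt (inv_pos.mpr hsu)
  have hc1 : c * (s ⬝ᵥ u) = 1 := inv_mul_cancel₀ (ne_of_gt hsu)
  set d : ℝ := (s ⬝ᵥ yt)⁻¹ with hd
  have hd0 : 0 ≤ d := le_of_lt (inv_pos.mpr hsy)
  set P : Matrix (Fin n) (Fin n) ℝ := B - c • vecMulVec u u with hP
  set R : Matrix (Fin n) (Fin n) ℝ := d • vecMulVec yt yt with hR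
  have hdecomp : Bplus = P + R + γ • (1 : Matrix (Fin n) (Fin n) ℝ) := by
    rw [hBplus, hsvb, hP, hR]
    abel
  -- positivity of B as an operator
  have hTB : (toEuclideanCLM (𝕜 := ℝ) B).IsPositive := by
    refine myIsPositive B hBT fun x => ?_
    have := hB.posSemidef.dotProduct_mulVec_nonneg x
    rw [dotProduct_comm]
    simpa using this
  -- quadratic form of vecMulVec u u
  have hquadP1 : ∀ x : Fin n → ℝ, ((c • vecMulVec u u) *ᵥ x) ⬝ᵥ x = c * ((u ⬝ᵥ x) * (u ⬝ᵥ x)) := by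
    intro x
    rw [Matrix.smul_mulVec, myVMV_mulVec, smul_dotProduct, smul_dotProduct,
      smul_eq_mul, smul_eq_mul]
  have hvmvT : (vecMulVec u u)ᵀ = vecMulVec u u := by
    ext i j
    simp [vecMulVec_apply, mul_comm]
  -- Cauchy–Schwarz in the B-inner product
  have hCS : ∀ x : Fin n → ℝ, (u ⬝ᵥ x) ^ 2 ≤ (s ⬝ᵥ u) * ((B *ᵥ x) ⬝ᵥ x) := by
    intro x
    have h := myPosCS _ hTB ((WithLp.equiv 2 (Fin n → ℝ)).symm s)
      ((WithLp.equiv 2 (Fin n → ℝ)).symm x)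
    simp only [myInner_clm, Equiv.apply_symm_apply] at h
    have h1 : (B *ᵥ s) ⬝ᵥ x = u ⬝ᵥ x := rfl
    have h2 : (B *ᵥ s) ⬝ᵥ s = s ⬝ᵥ u := dotProduct_comm _ _
    rw [h1, h2] at h
    exact h
  -- positivity of P
  have hTP : (toEuclideanCLM (𝕜 := ℝ) P).IsPositive := by
    refine myIsPositive P ?_ fun x => ?_
    · rw [hP, Matrix.transpose_sub, hBT, Matrix.transpose_smul, hvmvT]
    · rw [hP, Matrix.sub_mulVec, sub_dotProduct, hquadP1]
      have := hCS x
      have hq : 0 ≤ (B *ᵥ x) ⬝ᵥ x := by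
        have := hB.posSemidef.dotProduct_mulVec_nonneg x
        rw [dotProduct_comm]
        simpa using this
      nlinarith [hc0, hc1, hsu]
  -- positivity of B - P = c • vecMulVec u u
  have hTBP : (toEuclideanCLM (𝕜 := ℝ) B - toEuclideanCLM (𝕜 := ℝ) P).IsPositive := by
    rw [← map_sub]
    have hBP : B - P = c • vecMulVec u u := by rw [hP]; abel
    rw [hBP]
    refine myIsPositive _ ?_ fun x => ?_
    · rw [Matrix.transpose_smul, hvmvT]
    · rw [hquadP1]
      nlinarith [sq_nonneg (u ⬝ᵥ x), hc0]
  have hPB : specNorm P ≤ specNorm B := myNormMono _ _ hTP hTBP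
  -- norm of R
  have hRn : specNorm R ≤ (yt ⬝ᵥ yt) / (s ⬝ᵥ yt) := by
    rw [specNorm, hR, myCLM_smul]
    have hdd : (yt ⬝ᵥ yt) / (s ⬝ᵥ yt) = d * (yt ⬝ᵥ yt) := by
      rw [hd, div_eq_mul_inv, mul_comm]
    rw [hdd]
    calc ‖d • toEuclideanCLM (𝕜 := ℝ) (vecMulVec yt yt)‖
        ≤ ‖d‖ * ‖toEuclideanCLM (𝕜 := ℝ) (vecMulVec yt yt)‖ :=
          ContinuousLinearMap.opNorm_smul_le d _
      _ = d * ‖toEuclideanCLM (𝕜 := ℝ) (vecMulVec yt yt)‖ := by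
          rw [Real.norm_eq_abs, abs_of_nonneg hd0]
      _ ≤ d * (yt ⬝ᵥ yt) := mul_le_mul_of_nonneg_left (myNorm_vmv yt) hd0
  -- norm of γ • 1
  have hGn : specNorm (γ • (1 : Matrix (Fin n) (Fin n) ℝ)) ≤ γ := by
    rw [specNorm, myCLM_smul, _root_.map_one]
    calc ‖γ • (1 : EuclideanSpace ℝ (Fin n) →L[ℝ] EuclideanSpace ℝ (Fin n))‖
        ≤ ‖γ‖ * ‖(1 : EuclideanSpace ℝ (Fin n) →L[ℝ] EuclideanSpace ℝ (Fin n))‖ :=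
          ContinuousLinearMap.opNorm_smul_le γ _
      _ ≤ γ * 1 := by
          rw [Real.norm_eq_abs, abs_of_nonneg hγ]
          refine mul_le_mul_of_nonneg_left ?_ hγ
          rw [ContinuousLinearMap.one_def]
          exact ContinuousLinearMap.norm_id_le
      _ = γ := mul_one γ
  calc specNorm Bplus = ‖toEuclideanCLM (𝕜 := ℝ) P + toEuclideanCLM (𝕜 := ℝ) R
          + toEuclideanCLM (𝕜 := ℝ) (γ • (1 : Matrix (Fin n) (Fin n) ℝ))‖ := by
        rw [specNorm, hdecomp, map_add, map_add]
    _ ≤ ‖toEuclideanCLM (𝕜 := ℝ) P + toEuclideanCLM (𝕜 := ℝ) R‖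
          + ‖toEuclideanCLM (𝕜 := ℝ) (γ • (1 : Matrix (Fin n) (Fin n) ℝ))‖ := norm_add_le _ _
    _ ≤ (‖toEuclideanCLM (𝕜 := ℝ) P‖ + ‖toEuclideanCLM (𝕜 := ℝ) R‖)
          + ‖toEuclideanCLM (𝕜 := ℝ) (γ • (1 : Matrix (Fin n) (Fin n) ℝ))‖ := by
        gcongr
        exact norm_add_le _ _
    _ ≤ specNorm B + (yt ⬝ᵥ yt) / (s ⬝ᵥ yt) + γ := by
        have := hPB; have := hRn; have := hGn
        simp only [specNorm] at *
        gcongr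
end

section
/- (Key step of Lemma 2) Let ρ > 0, β > 0, γ > 0 and δ > 0 with 0.8 δ ≥ γ, and let τ satisfy β ≤ τ ≤ β + ρ + γ. Let s ∈ ℝⁿ be nonzero and y ∈ ℝⁿ satisfy ‖y‖² ≤ ρ² sᵀs and |sᵀy| ≤ ρ sᵀs. Define θ = (0.8 (τ + δ) sᵀs − γ sᵀs)/((τ + δ) sᵀs − sᵀy) if sᵀy ≤ 0.2 (τ + δ) sᵀs + γ sᵀs and θ = 1 otherwise, and set ỹ = θ y + (1 − θ)(τ + δ) s − γ s. Then (ỹᵀỹ)/(sᵀỹ) ≤ Q + 5ρ, where Q = max{ 5(ρ + γ)²/(β + δ) + 5(β + δ), 5(ρ + γ)²/(β + ρ + γ + δ) + 5(β + ρ + γ + δ) }. -/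
open Matrix

/-- Convexity-style endpoint bound for `A/x + 5x` on an interval. -/
lemma endpoint_max_bound (A p q t : ℝ) (hA : 0 ≤ A) (hp : 0 < p) (hpt : p ≤ t) (htq : t ≤ q) :
    A / t + 5 * t ≤ max (A / p + 5 * p) (A / q + 5 * q) := by
  have ht : 0 < t := lt_of_lt_of_le hp hpt
  have hq : 0 < q := lt_of_lt_of_le ht htq
  rcases le_or_gt A (5 * (t * q)) with h | h
  · refine le_trans ?_ (le_max_right _ _)
    have hd : A / t - A / q = A * (q - t) / (t * q) := by
      field_simp
    have hdle : A * (q - t) / (t * q) ≤ 5 * (q - t) := by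
      rw [div_le_iff₀ (by positivity)]
      nlinarith [sub_nonneg.2 htq]
    linarith
  · refine le_trans ?_ (le_max_left _ _)
    have hd : A / p - A / t = A * (t - p) / (p * t) := by
      field_simp
    have hdle : 5 * (t - p) ≤ A * (t - p) / (p * t) := by
      rw [le_div_iff₀ (by positivity)]
      have h5 : 5 * (p * t) ≤ A := by nlinarith
      nlinarith [mul_le_mul_of_nonneg_right h5 (sub_nonneg.2 hpt)]
    linarith

set_option maxHeartbeats 1000000 in
/-- Purely scalar core of the damped curvature ratio bound. -/
lemma core_ratio_bound (ρ β γ δ τ a b c θ : ℝ)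
    (hρ : 0 < ρ) (hβ : 0 < β) (hγ : 0 < γ) (hδ : 0 < δ) (hδγ : γ ≤ 0.8 * δ)
    (hτl : β ≤ τ) (hτu : τ ≤ β + ρ + γ)
    (hapos : 0 < a) (hcnn : 0 ≤ c) (hcs : b ^ 2 ≤ a * c) (hy : c ≤ ρ ^ 2 * a)
    (hθ : θ = if b ≤ 0.2 * ((τ + δ) * a) + γ * a
        then (0.8 * ((τ + δ) * a) - γ * a) / ((τ + δ) * a - b) else 1) :
    (θ ^ 2 * c + 2 * θ * ((1 - θ) * (τ + δ) - γ) * b + ((1 - θ) * (τ + δ) - γ) ^ 2 * a)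
      / (θ * b + ((1 - θ) * (τ + δ) - γ) * a)
    ≤ max (5 * (ρ + γ) ^ 2 / (β + δ) + 5 * (β + δ))
        (5 * (ρ + γ) ^ 2 / (β + ρ + γ + δ) + 5 * (β + ρ + γ + δ)) + 5 * ρ := by
  set t := τ + δ with ht
  have htpos : 0 < t := by rw [ht]; linarith
  have h08 : 0 < 0.8 * t - γ := by rw [ht]; linarith
  set N := θ ^ 2 * c + 2 * θ * ((1 - θ) * t - γ) * b + ((1 - θ) * t - γ) ^ 2 * a with hN
  set D := θ * b + ((1 - θ) * t - γ) * a with hD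
  clear_value t N D
  have key : N / D ≤ 5 * ρ ^ 2 / t + 0.2 * t := by
    split_ifs at hθ with hcond
    · -- damped case
      have hga : (0.8 * t - γ) * a ≤ t * a - b := by
        linarith [hcond]
      have hdenpos : 0 < t * a - b := lt_of_lt_of_le (mul_pos h08 hapos) hga
      have hkey : θ * (t * a - b) = 0.8 * t * a - γ * a := by
        rw [hθ]; field_simp
      have hθpos : 0 < θ := by
        rw [hθ]
        exact div_pos (by linarith [mul_pos h08 hapos]) hdenpos
      have hθ1 : θ ≤ 1 := by
        rw [hθ, div_le_one hdenpos]; linarith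
      clear hθ
      have hD2 : D = 0.2 * t * a := by
        rw [hD]; linear_combination -hkey
      have hmu : ((1 - θ) * t - γ) * a = 0.2 * t * a - θ * b := by
        rw [hD] at hD2; linarith
      have hid : a * N = θ ^ 2 * (a * c - b ^ 2) + 0.04 * t ^ 2 * a ^ 2 := by
        rw [hN]
        linear_combination (((1 - θ) * t - γ) * a + θ * b + 0.2 * t * a) * hmu
      have hab : 0 ≤ a * c - b ^ 2 := by linarith
      have hsq : θ ^ 2 ≤ 1 := pow_le_one₀ hθpos.le hθ1
      have hac : a * c ≤ ρ ^ 2 * a ^ 2 := by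
        have := mul_le_mul_of_nonneg_left hy hapos.le
        linarith [this, sq_nonneg a, (by ring : a * (ρ ^ 2 * a) = ρ ^ 2 * a ^ 2)]
      have h1 : θ ^ 2 * (a * c - b ^ 2) ≤ ρ ^ 2 * a ^ 2 := by
        have := mul_le_mul_of_nonneg_right hsq hab
        have hb2 : (0:ℝ) ≤ b ^ 2 := sq_nonneg b
        linarith
      have hnum : N ≤ ρ ^ 2 * a + 0.04 * t ^ 2 * a := by
        have h2 : a * N ≤ a * (ρ ^ 2 * a + 0.04 * t ^ 2 * a) := by
          rw [hid]
          have : a * (ρ ^ 2 * a + 0.04 * t ^ 2 * a)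
              = ρ ^ 2 * a ^ 2 + 0.04 * t ^ 2 * a ^ 2 := by ring
          linarith
        exact le_of_mul_le_mul_left h2 hapos
      rw [hD2, div_le_iff₀ (mul_pos (mul_pos (by norm_num : (0:ℝ) < 0.2) htpos) hapos)]
      have hRHS : (5 * ρ ^ 2 / t + 0.2 * t) * (0.2 * t * a)
          = ρ ^ 2 * a + 0.04 * t ^ 2 * a := by
        field_simp; ring
      rw [hRHS]; exact hnum
    · -- undamped case
      push_neg at hcond
      subst hθ
      have hNv : N = c - 2 * γ * b + γ ^ 2 * a := by rw [hN]; ring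
      have hDv : D = b - γ * a := by rw [hD]; ring
      have hblow : 0.2 * t * a < b - γ * a := by linarith [hcond]
      have hbpos : 0 < b - γ * a :=
        lt_trans (mul_pos (mul_pos (by norm_num : (0:ℝ) < 0.2) htpos) hapos) hblow
      rw [hNv, hDv, div_le_iff₀ hbpos]
      have hbg : 0 < 2 * b - γ * a := by
        linarith [hcond, mul_pos htpos hapos, mul_pos hγ hapos]
      have hnum : c - 2 * γ * b + γ ^ 2 * a ≤ ρ ^ 2 * a := by
        have := mul_pos hγ hbg
        linarith [hy, this]
      have hcoef : (0:ℝ) < 5 * ρ ^ 2 / t + 0.2 * t :=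
        add_pos (div_pos (by nlinarith [sq_nonneg ρ] : (0:ℝ) < 5 * ρ ^ 2) htpos)
          (mul_pos (by norm_num : (0:ℝ) < 0.2) htpos)
      have hmono := mul_le_mul_of_nonneg_left hblow.le hcoef.le
      have h02 : (5 * ρ ^ 2 / t + 0.2 * t) * (0.2 * t * a)
          = ρ ^ 2 * a + 0.04 * t ^ 2 * a := by field_simp; ring
      have hta : (0:ℝ) ≤ 0.04 * t ^ 2 * a := by positivity
      linarith
  have hAq : 5 * ρ ^ 2 / t + 0.2 * t ≤ 5 * (ρ + γ) ^ 2 / t + 5 * t := by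
    have h1 : 5 * ρ ^ 2 / t ≤ 5 * (ρ + γ) ^ 2 / t := by
      refine (div_le_div_iff_of_pos_right htpos).mpr ?_
      nlinarith
    linarith
  have hfQ := endpoint_max_bound (5 * (ρ + γ) ^ 2) (β + δ) (β + ρ + γ + δ) t (by positivity)
    (by linarith) (by rw [ht]; linarith) (by rw [ht]; linarith)
  linarith

/-- **key step of Lemma 2.** With `β ≤ τ ≤ β + ρ + γ`, `‖y‖² ≤ ρ² sᵀs`,
`|sᵀy| ≤ ρ sᵀs`, the damped parameter `θ` and `ỹ = θ y + (1 − θ)(τ + δ) s − γ s`,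
one has `(ỹᵀỹ)/(sᵀỹ) ≤ Q + 5ρ`. -/
theorem damped_curvature_ratio_bound {n : ℕ} (ρ β γ δ : ℝ)
    (hρ : 0 < ρ) (hβ : 0 < β) (hγ : 0 < γ) (hδ : 0 < δ) (hδγ : γ ≤ 0.8 * δ)
    (τ : ℝ) (hτl : β ≤ τ) (hτu : τ ≤ β + ρ + γ)
    (s y : Fin n → ℝ) (hs : s ≠ 0)
    (hy : y ⬝ᵥ y ≤ ρ ^ 2 * (s ⬝ᵥ s)) (hsy : |s ⬝ᵥ y| ≤ ρ * (s ⬝ᵥ s))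
    (θ : ℝ)
    (hθ : θ = if s ⬝ᵥ y ≤ 0.2 * ((τ + δ) * (s ⬝ᵥ s)) + γ * (s ⬝ᵥ s)
        then (0.8 * ((τ + δ) * (s ⬝ᵥ s)) - γ * (s ⬝ᵥ s))
          / ((τ + δ) * (s ⬝ᵥ s) - s ⬝ᵥ y)
        else 1)
    (yt : Fin n → ℝ)
    (hyt : yt = θ • y + ((1 - θ) * (τ + δ)) • s - γ • s)
    (Q : ℝ)
    (hQ : Q = max (5 * (ρ + γ) ^ 2 / (β + δ) + 5 * (β + δ))
        (5 * (ρ + γ) ^ 2 / (β + ρ + γ + δ) + 5 * (β + ρ + γ + δ))) :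
    (yt ⬝ᵥ yt) / (s ⬝ᵥ yt) ≤ Q + 5 * ρ := by
  have hyt' : yt = θ • y + ((1 - θ) * (τ + δ) - γ) • s := by
    rw [hyt, sub_smul, add_sub_assoc]
  have hsyt : s ⬝ᵥ yt = θ * (s ⬝ᵥ y) + ((1 - θ) * (τ + δ) - γ) * (s ⬝ᵥ s) := by
    rw [hyt']
    simp [dotProduct_add, dotProduct_smul, smul_eq_mul, dotProduct_comm y s]
  have hytyt : yt ⬝ᵥ yt = θ ^ 2 * (y ⬝ᵥ y) + 2 * θ * ((1 - θ) * (τ + δ) - γ) * (s ⬝ᵥ y)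
      + ((1 - θ) * (τ + δ) - γ) ^ 2 * (s ⬝ᵥ s) := by
    rw [hyt']
    simp [dotProduct_add, add_dotProduct, dotProduct_smul, smul_dotProduct, smul_eq_mul,
      dotProduct_comm y s]
    ring
  have hapos : 0 < s ⬝ᵥ s := by
    rcases lt_or_eq_of_le (Finset.sum_nonneg fun i _ => mul_self_nonneg (s i)
      : (0:ℝ) ≤ s ⬝ᵥ s) with h | h
    · exact h
    · exact absurd (dotProduct_self_eq_zero.mp h.symm) hs
  have hcnn : (0:ℝ) ≤ y ⬝ᵥ y := Finset.sum_nonneg fun i _ => mul_self_nonneg (y i)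
  have hcs : (s ⬝ᵥ y) ^ 2 ≤ (s ⬝ᵥ s) * (y ⬝ᵥ y) := by
    have := Finset.sum_mul_sq_le_sq_mul_sq Finset.univ s y
    simpa [dotProduct, sq] using this
  rw [hsyt, hytyt, hQ]
  exact core_ratio_bound ρ β γ δ τ (s ⬝ᵥ s) (s ⬝ᵥ y) (y ⬝ᵥ y) θ hρ hβ hγ hδ hδγ hτl hτu
    hapos hcnn hcs hy hθ
end

section
/- Let B be an n×n real symmetric positive definite matrix and s, ỹ ∈ ℝⁿ with sᵀỹ > 0. Then the BFGS update C = B + (ỹ ỹᵀ)/(sᵀỹ) − (B s sᵀ B)/(sᵀ B s) is invertible and its inverse is given by C⁻¹ = (I − (s ỹᵀ)/(sᵀỹ)) B⁻¹ (I − (ỹ sᵀ)/(sᵀỹ)) + (s sᵀ)/(sᵀỹ). -/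
open Matrix

namespace BFGSAux

variable {n : ℕ}

lemma mul_vv (A : Matrix (Fin n) (Fin n) ℝ) (a b : Fin n → ℝ) :
    A * vecMulVec a b = vecMulVec (A *ᵥ a) b := by
  ext i j
  simp [Matrix.mul_apply, vecMulVec_apply, mulVec, dotProduct, Finset.sum_mul, mul_assoc]

lemma vv_mul (A : Matrix (Fin n) (Fin n) ℝ) (a b : Fin n → ℝ) :
    vecMulVec a b * A = vecMulVec a (b ᵥ* A) := by
  ext i j
  simp [Matrix.mul_apply, vecMulVec_apply, vecMul, dotProduct, Finset.mul_sum, mul_assoc]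

lemma vv_mul_vv (a b c d : Fin n → ℝ) :
    vecMulVec a b * vecMulVec c d = (b ⬝ᵥ c) • vecMulVec a d := by
  ext i j
  simp only [Matrix.mul_apply, vecMulVec_apply, Matrix.smul_apply, dotProduct, Finset.sum_mul,
    smul_eq_mul]
  exact Finset.sum_congr rfl fun k _ => by ring

lemma vv_mulVec (a b x : Fin n → ℝ) :
    vecMulVec a b *ᵥ x = (b ⬝ᵥ x) • a := by
  ext i
  simp [mulVec, vecMulVec_apply, dotProduct, Finset.sum_mul, Finset.mul_sum, mul_assoc,
    mul_comm, mul_left_comm]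

lemma smul_vv (k : ℝ) (a b : Fin n → ℝ) :
    vecMulVec (k • a) b = k • vecMulVec a b := by
  ext i j
  simp [vecMulVec_apply, mul_assoc]

lemma vv_smul (k : ℝ) (a b : Fin n → ℝ) :
    vecMulVec a (k • b) = k • vecMulVec a b := by
  ext i j
  simp [vecMulVec_apply, mul_assoc, mul_left_comm]

end BFGSAux

/-- For `B` symmetric positive definite and `sᵀỹ > 0`, the BFGS update
`C = B + (ỹ ỹᵀ)/(sᵀỹ) − (B s sᵀ B)/(sᵀ B s)` is invertible and
`C⁻¹ = (I − (s ỹᵀ)/(sᵀỹ)) B⁻¹ (I − (ỹ sᵀ)/(sᵀỹ)) + (s sᵀ)/(sᵀỹ)`. -/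
theorem bfgs_inverse_formula {n : ℕ} (B : Matrix (Fin n) (Fin n) ℝ) (hB : B.PosDef)
    (s yt : Fin n → ℝ) (hsy : 0 < s ⬝ᵥ yt) (C : Matrix (Fin n) (Fin n) ℝ)
    (hC : C = B + (s ⬝ᵥ yt)⁻¹ • vecMulVec yt yt
        - (s ⬝ᵥ (B *ᵥ s))⁻¹ • vecMulVec (B *ᵥ s) (s ᵥ* B)) :
    IsUnit C
    ∧ C⁻¹ = ((1 : Matrix (Fin n) (Fin n) ℝ) - (s ⬝ᵥ yt)⁻¹ • vecMulVec s yt)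
        * B⁻¹ * ((1 : Matrix (Fin n) (Fin n) ℝ) - (s ⬝ᵥ yt)⁻¹ • vecMulVec yt s)
        + (s ⬝ᵥ yt)⁻¹ • vecMulVec s s := by
  have hBsymm : Bᵀ = B := hB.1
  have hs0 : s ≠ 0 := by
    rintro rfl; simp at hsy
  have ha : s ⬝ᵥ yt ≠ 0 := hsy.ne'
  have hbpos : 0 < s ⬝ᵥ (B *ᵥ s) := by simpa using hB.dotProduct_mulVec_pos hs0
  have hb : s ⬝ᵥ (B *ᵥ s) ≠ 0 := hbpos.ne'
  have hdet : B.det ≠ 0 := hB.det_pos.ne'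
  have hBu : B * B⁻¹ = 1 := mul_nonsing_inv B (isUnit_iff_ne_zero.mpr hdet)
  have hUB : B⁻¹ * B = 1 := nonsing_inv_mul B (isUnit_iff_ne_zero.mpr hdet)
  have hUsymm : (B⁻¹)ᵀ = B⁻¹ := by rw [transpose_nonsing_inv, hBsymm]
  have hsB : s ᵥ* B = B *ᵥ s := by
    nth_rewrite 1 [← hBsymm]; exact vecMul_transpose B s
  have hytU : yt ᵥ* B⁻¹ = B⁻¹ *ᵥ yt := by
    nth_rewrite 1 [← hUsymm]; exact vecMul_transpose B⁻¹ yt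
  have hpU : (B *ᵥ s) ᵥ* B⁻¹ = s := by
    nth_rewrite 1 [← hUsymm]
    rw [vecMul_transpose, mulVec_mulVec, hUB, one_mulVec]
  have hBq : B *ᵥ (B⁻¹ *ᵥ yt) = yt := by rw [mulVec_mulVec, hBu, one_mulVec]
  have hd1 : yt ⬝ᵥ s = s ⬝ᵥ yt := dotProduct_comm _ _
  have hd2 : (B *ᵥ s) ⬝ᵥ s = s ⬝ᵥ (B *ᵥ s) := dotProduct_comm _ _
  have hqB : (B⁻¹ *ᵥ yt) ᵥ* B = yt := by
    nth_rewrite 2 [← hBsymm]; rw [vecMul_transpose, hBq]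
  have hd3 : (B *ᵥ s) ⬝ᵥ (B⁻¹ *ᵥ yt) = s ⬝ᵥ yt := by
    rw [dotProduct_comm, dotProduct_mulVec, hqB, hd1]
  have hCD : C * (((1 : Matrix (Fin n) (Fin n) ℝ) - (s ⬝ᵥ yt)⁻¹ • vecMulVec s yt)
        * B⁻¹ * ((1 : Matrix (Fin n) (Fin n) ℝ) - (s ⬝ᵥ yt)⁻¹ • vecMulVec yt s)
        + (s ⬝ᵥ yt)⁻¹ • vecMulVec s s) = 1 := by
    subst hC
    rw [hsB]
    simp only [Matrix.sub_mul, Matrix.mul_sub, Matrix.add_mul, Matrix.mul_add,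
      Matrix.smul_mul, Matrix.mul_smul, BFGSAux.mul_vv, BFGSAux.vv_mul, BFGSAux.vv_mul_vv, BFGSAux.vv_mulVec, BFGSAux.smul_vv, BFGSAux.vv_smul,
      smul_dotProduct, dotProduct_smul, smul_eq_mul,
      Matrix.mul_one, Matrix.one_mul, smul_smul, hBu, hytU, hpU, hBq, hd1, hd2, hd3,
      mulVec_mulVec]
    match_scalars <;> field_simp <;> ring
  refine ⟨?_, inv_eq_right_inv hCD⟩
  exact (Matrix.isUnit_iff_isUnit_det C).mpr
    (IsUnit.of_mul_eq_one _ (by rw [← det_mul, hCD, det_one]))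
end

section
/- Let B be an n×n real symmetric positive definite matrix, s, ỹ ∈ ℝⁿ with sᵀỹ > 0, and γ ≥ 0. Then the regularized BFGS update B⁺ = B + (ỹ ỹᵀ)/(sᵀỹ) − (B s sᵀ B)/(sᵀ B s) + γ I is symmetric positive definite and its inverse satisfies, in the Loewner order, (B⁺)⁻¹ ⪯ (I − (s ỹᵀ)/(sᵀỹ)) B⁻¹ (I − (ỹ sᵀ)/(sᵀỹ)) + (s sᵀ)/(sᵀỹ). -/
open Matrix

lemma myVecMulVec_mulVec {n : ℕ} (a b x : Fin n → ℝ) :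
    vecMulVec a b *ᵥ x = (b ⬝ᵥ x) • a := by
  ext i
  simp [vecMulVec_apply, mulVec, dotProduct, Finset.sum_mul, Finset.mul_sum]
  exact Finset.sum_congr rfl fun j _ => by ring

lemma myEq_of_mulVec {n : ℕ} (A B : Matrix (Fin n) (Fin n) ℝ)
    (h : ∀ x, A *ᵥ x = B *ᵥ x) : A = B := by
  ext i j
  have := congrFun (h (Pi.single j 1)) i
  simpa [mulVec_single] using this

lemma myInvSub {n : ℕ} {A C : Matrix (Fin n) (Fin n) ℝ}
    (hA : A.PosDef) (hC : C.PosDef) (hD : (C - A).PosSemidef) :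
    (A⁻¹ - C⁻¹).PosSemidef := by
  have hAd : IsUnit A.det := isUnit_iff_ne_zero.mpr hA.det_pos.ne'
  have hCd : IsUnit C.det := isUnit_iff_ne_zero.mpr hC.det_pos.ne'
  have h1 : A⁻¹ * (C - A) * C⁻¹ = A⁻¹ - C⁻¹ := by
    rw [mul_sub, Matrix.nonsing_inv_mul _ hAd, sub_mul, one_mul, mul_assoc,
      Matrix.mul_nonsing_inv _ hCd, mul_one]
  have h2 : C⁻¹ * (C - A) * A⁻¹ = A⁻¹ - C⁻¹ := by
    rw [mul_sub, Matrix.nonsing_inv_mul _ hCd, sub_mul, one_mul, mul_assoc,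
      Matrix.mul_nonsing_inv _ hAd, mul_one]
  have key : C⁻¹ * (C - A) * C⁻¹ + (C⁻¹ * (C - A)) * A⁻¹ * (C⁻¹ * (C - A))ᴴ
      = A⁻¹ - C⁻¹ := by
    have hDt : (C - A)ᴴ = C - A := hD.isHermitian
    have hCt : (C⁻¹)ᴴ = C⁻¹ := hC.inv.isHermitian
    rw [conjTranspose_mul, hDt, hCt]
    calc C⁻¹ * (C - A) * C⁻¹ + C⁻¹ * (C - A) * A⁻¹ * ((C - A) * C⁻¹)
        = C⁻¹ * (C - A) * C⁻¹ + C⁻¹ * (C - A) * (A⁻¹ * (C - A) * C⁻¹) := by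
          simp only [mul_assoc]
      _ = C⁻¹ * (C - A) * C⁻¹ + C⁻¹ * (C - A) * (A⁻¹ - C⁻¹) := by rw [h1]
      _ = C⁻¹ * (C - A) * A⁻¹ := by noncomm_ring
      _ = A⁻¹ - C⁻¹ := h2
  rw [← key]
  refine PosSemidef.add ?_ ?_
  · have := hD.mul_mul_conjTranspose_same C⁻¹
    rwa [hC.inv.isHermitian.eq] at this
  · exact hA.inv.posSemidef.mul_mul_conjTranspose_same _

/-- For `B` symmetric positive definite, `sᵀỹ > 0` and `γ ≥ 0`, the
regularized BFGS update `B⁺ = B + (ỹ ỹᵀ)/(sᵀỹ) − (B s sᵀ B)/(sᵀ B s) + γ I` is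
symmetric positive definite and, in the Loewner order,
`(B⁺)⁻¹ ⪯ (I − (s ỹᵀ)/(sᵀỹ)) B⁻¹ (I − (ỹ sᵀ)/(sᵀỹ)) + (s sᵀ)/(sᵀỹ)`. -/
theorem regularized_bfgs_inverse_loewner_bound {n : ℕ} (B : Matrix (Fin n) (Fin n) ℝ)
    (hB : B.PosDef) (s yt : Fin n → ℝ) (hsy : 0 < s ⬝ᵥ yt) (γ : ℝ) (hγ : 0 ≤ γ)
    (Bplus : Matrix (Fin n) (Fin n) ℝ)
    (hBplus : Bplus = B + (s ⬝ᵥ yt)⁻¹ • vecMulVec yt yt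
        - (s ⬝ᵥ (B *ᵥ s))⁻¹ • vecMulVec (B *ᵥ s) (s ᵥ* B)
        + γ • (1 : Matrix (Fin n) (Fin n) ℝ)) :
    Bplus.PosDef
    ∧ (((1 : Matrix (Fin n) (Fin n) ℝ) - (s ⬝ᵥ yt)⁻¹ • vecMulVec s yt)
          * B⁻¹ * ((1 : Matrix (Fin n) (Fin n) ℝ) - (s ⬝ᵥ yt)⁻¹ • vecMulVec yt s)
          + (s ⬝ᵥ yt)⁻¹ • vecMulVec s s - Bplus⁻¹).PosSemidef := by
  have hBt : Bᵀ = B := by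
    have h := hB.isHermitian.eq
    rwa [conjTranspose_eq_transpose_of_trivial] at h
  have hvB : s ᵥ* B = B *ᵥ s := by rw [← mulVec_transpose, hBt]
  set u : Fin n → ℝ := B *ᵥ s with hu
  have hs0 : s ≠ 0 := fun h => by simp [h] at hsy
  have hsu : 0 < s ⬝ᵥ u := by simpa using hB.dotProduct_mulVec_pos hs0
  set ρ : ℝ := (s ⬝ᵥ yt)⁻¹ with hρ
  set σ : ℝ := (s ⬝ᵥ u)⁻¹ with hσ
  set B₀ : Matrix (Fin n) (Fin n) ℝ :=
    B + ρ • vecMulVec yt yt - σ • vecMulVec u u with hB₀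
  have hBp : Bplus = B₀ + γ • 1 := by rw [hBplus, hvB]
  have hsBx : ∀ v, s ⬝ᵥ (B *ᵥ v) = u ⬝ᵥ v := fun v => by
    rw [dotProduct_mulVec, hvB]
  -- positive definiteness of B₀
  have hB₀H : B₀.IsHermitian := by
    show B₀ᴴ = B₀
    have h1 : (vecMulVec yt yt)ᵀ = vecMulVec yt yt := by
      ext i j; simp [vecMulVec_apply, transpose_apply, mul_comm]
    have h2 : (vecMulVec u u)ᵀ = vecMulVec u u := by
      ext i j; simp [vecMulVec_apply, transpose_apply, mul_comm]
    simp [hB₀, conjTranspose_add, conjTranspose_sub, conjTranspose_smul,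
      hBt, h1, h2]
  have hB₀PD : B₀.PosDef := by
    refine PosDef.of_dotProduct_mulVec_pos hB₀H fun x hx => ?_
    have expand : x ⬝ᵥ (B₀ *ᵥ x)
        = x ⬝ᵥ (B *ᵥ x) + ρ * (yt ⬝ᵥ x) ^ 2 - σ * (u ⬝ᵥ x) ^ 2 := by
      simp [hB₀, add_mulVec, sub_mulVec, smul_mulVec, myVecMulVec_mulVec,
        dotProduct_add, dotProduct_sub, dotProduct_smul, smul_eq_mul,
        dotProduct_comm x yt, dotProduct_comm x u]
      ring
    set t : ℝ := σ * (u ⬝ᵥ x) with ht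
    set z : Fin n → ℝ := x - t • s with hz
    have hzval : z ⬝ᵥ (B *ᵥ z) = x ⬝ᵥ (B *ᵥ x) - σ * (u ⬝ᵥ x) ^ 2 := by
      have hxu : x ⬝ᵥ u = u ⬝ᵥ x := dotProduct_comm x u
      simp [hz, mulVec_sub, mulVec_smul, dotProduct_sub, sub_dotProduct,
        smul_dotProduct, dotProduct_smul, smul_eq_mul, hsBx, hxu, ht]
      have hxBs : x ⬝ᵥ (B *ᵥ s) = u ⬝ᵥ x := hxu
      have hσs : σ * (u ⬝ᵥ s) = 1 := by
        rw [hσ, dotProduct_comm u s]; exact inv_mul_cancel₀ hsu.ne'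
      rw [hxBs]
      linear_combination (σ * (u ⬝ᵥ x) ^ 2) * hσs
    have main : x ⬝ᵥ (B₀ *ᵥ x) = z ⬝ᵥ (B *ᵥ z) + ρ * (yt ⬝ᵥ x) ^ 2 := by
      rw [hzval, expand]; ring
    have goalr : (star x) ⬝ᵥ (B₀ *ᵥ x) = x ⬝ᵥ (B₀ *ᵥ x) := by simp
    rw [goalr, main]
    rcases eq_or_ne z 0 with hz0 | hz0
    · have hxts : x = t • s := by
        have := hz0; rw [hz, sub_eq_zero] at this; exact this
      have htne : t ≠ 0 := by
        intro h; apply hx; rw [hxts, h, zero_smul]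
      have hyx : yt ⬝ᵥ x = t * (s ⬝ᵥ yt) := by
        rw [hxts, dotProduct_smul, smul_eq_mul, dotProduct_comm]
      rw [hz0]
      have : 0 < ρ * (yt ⬝ᵥ x) ^ 2 := by
        apply mul_pos (inv_pos.mpr hsy)
        rw [hyx]
        positivity
      simpa using this
    · have h1 : 0 < z ⬝ᵥ (B *ᵥ z) := by simpa using hB.dotProduct_mulVec_pos hz0
      have h2 : 0 ≤ ρ * (yt ⬝ᵥ x) ^ 2 := by positivity
      linarith
  -- the inverse identity
  have hdet : IsUnit B.det := isUnit_iff_ne_zero.mpr hB.det_pos.ne'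
  have hinv : B⁻¹ * B = 1 := nonsing_inv_mul B hdet
  have hinvBx : ∀ v, B⁻¹ *ᵥ (B *ᵥ v) = v := fun v => by
    rw [mulVec_mulVec, hinv, one_mulVec]
  have hinvu : B⁻¹ *ᵥ u = s := by rw [hu]; exact hinvBx s
  set H : Matrix (Fin n) (Fin n) ℝ :=
    (1 - ρ • vecMulVec s yt) * B⁻¹ * (1 - ρ • vecMulVec yt s) + ρ • vecMulVec s s
    with hH
  have hHB : H * B₀ = 1 := by
    apply myEq_of_mulVec
    intro x
    have step : (H * B₀) *ᵥ x = H *ᵥ (B₀ *ᵥ x) := by rw [← mulVec_mulVec]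
    rw [step, one_mulVec]
    simp only [hH, hB₀, Matrix.add_mul, Matrix.sub_mul, Matrix.mul_add,
      Matrix.mul_sub, add_mulVec, sub_mulVec, one_mulVec, one_mul, mul_one,
      smul_mulVec, myVecMulVec_mulVec, mulVec_add, mulVec_sub, mulVec_smul,
      ← mulVec_mulVec, hinvBx, hinvu, dotProduct_add, dotProduct_sub,
      dotProduct_smul, smul_eq_mul, hsBx, smul_smul, smul_sub, smul_add]
    have hρs : ρ * (s ⬝ᵥ yt) = 1 := by rw [hρ]; exact inv_mul_cancel₀ hsy.ne'
    have hρs' : ρ * (yt ⬝ᵥ s) = 1 := by rw [dotProduct_comm yt s]; exact hρs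
    have hσs : σ * (s ⬝ᵥ u) = 1 := by rw [hσ]; exact inv_mul_cancel₀ hsu.ne'
    match_scalars
    · rfl
    · linear_combination (ρ * (yt ⬝ᵥ x) * (ρ * (yt ⬝ᵥ B⁻¹ *ᵥ yt)) + ρ * (yt ⬝ᵥ x)) * hρs
        + σ * (u ⬝ᵥ x) * hρs'
        - (ρ * (u ⬝ᵥ x) * (ρ * (yt ⬝ᵥ B⁻¹ *ᵥ yt)) + ρ * (u ⬝ᵥ x)) * hσs
    · linear_combination (-ρ * (yt ⬝ᵥ x)) * hρs + (ρ * (u ⬝ᵥ x)) * hσs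
  have hB₀inv : B₀⁻¹ = H := inv_eq_left_inv hHB
  have hγpsd : (γ • (1 : Matrix (Fin n) (Fin n) ℝ)).PosSemidef := by
    refine PosSemidef.of_dotProduct_mulVec_nonneg ?_ fun x => ?_
    · show _ = _
      simp [conjTranspose_smul]
    · simp only [smul_mulVec, one_mulVec, dotProduct_smul, smul_eq_mul]
      have : (0:ℝ) ≤ star x ⬝ᵥ x := by
        simp [dotProduct]
        exact Finset.sum_nonneg fun i _ => mul_self_nonneg _
      exact mul_nonneg hγ this
  have hBpPD : Bplus.PosDef := by rw [hBp]; exact hB₀PD.add_posSemidef hγpsd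
  have hdiff : (Bplus - B₀).PosSemidef := by rw [hBp]; simpa using hγpsd
  have final := myInvSub hB₀PD hBpPD hdiff
  rw [hB₀inv] at final
  exact ⟨hBpPD, final⟩
end
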